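/- The interval [0,1] singly anticipates ℝ₊: every martingale with nonnegative real wagers is dominated by a martingale whose wagers lie in [0,1]. -/
import Mathlib


/-- A martingale: a betting strategy on binary sequences. -/
def IsMartingale (M : List Bool → ℝ) : Prop :=
  ∀ σ : List Bool, M σ = (M (σ ++ [true]) + M (σ ++ [false])) / 2

/-- The increment (wager) of a martingale at a history `σ`. -/
def inc (M : List Bool → ℝ) (σ : List Bool) : ℝ := M (σ ++ [true]) - M σ

/-- An `A`-martingale: all absolute increments lie in `A`. -/
def IsAMartingale (A : Set ℝ) (M : List Bool → ℝ) : Prop :=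
  IsMartingale M ∧ ∀ σ : List Bool, |inc M σ| ∈ A

/-- The first `n` bits of an infinite binary sequence, as a list. -/
def pref (X : ℕ → Bool) (n : ℕ) : List Bool := (List.range n).map X

/-- `M` succeeds on `X`: its value tends to infinity and it never bets more than it has. -/
def Succeeds (M : List Bool → ℝ) (X : ℕ → Bool) : Prop :=
  Filter.Tendsto (fun n => M (pref X n)) Filter.atTop Filter.atTop ∧
  ∀ n : ℕ, |inc M (pref X n)| ≤ M (pref X n)

/-- `N` dominates `M`: `N` succeeds on every sequence on which `M` succeeds. -/
def Dominates (N M : List Bool → ℝ) : Prop :=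
  ∀ X : ℕ → Bool, Succeeds M X → Succeeds N X

/-- `B` singly anticipates `A`: every `A`-martingale is dominated by some `B`-martingale. -/
def SinglyAnticipates (B A : Set ℝ) : Prop :=
  ∀ M : List Bool → ℝ, IsAMartingale A M →
    ∃ N : List Bool → ℝ, IsAMartingale B N ∧ Dominates N M

/-- `B` (countably) anticipates `A`: every `A`-martingale is dominated by a countable
set of `B`-martingales. -/
def Anticipates (B A : Set ℝ) : Prop :=
  ∀ M : List Bool → ℝ, IsAMartingale A M →
    ∃ N : ℕ → List Bool → ℝ, (∀ i, IsAMartingale B (N i)) ∧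
      ∀ X : ℕ → Bool, Succeeds M X → ∃ i, Succeeds (N i) X

noncomputable section AuxProof

/-- sign of a bit as a real -/
def bsgn (b : Bool) : ℝ := if b then 1 else -1

/-- scaling factor -/
def auxf (x : ℝ) : ℝ := min (1/x) 1

/-- the clamped scaled wager -/
def auxw (M : List Bool → ℝ) (σ : List Bool) : ℝ :=
  max (-1) (min 1 (inc M σ * auxf (M σ)))

/-- potential function: primitive of auxf -/
def auxg (x : ℝ) : ℝ := if x ≤ 1 then x else 1 + Real.log x

/-- the dominating martingale -/
def auxN (M : List Bool → ℝ) (σ : List Bool) : ℝ :=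
  1 + |auxg (M [])| +
    ∑ i ∈ Finset.range σ.length, bsgn (σ.getD i false) * auxw M (σ.take i)

lemma abs_auxw_le_one (M : List Bool → ℝ) (σ : List Bool) : |auxw M σ| ≤ 1 := by
  rw [abs_le]
  constructor
  · exact le_max_left _ _
  · exact max_le (by norm_num) (min_le_left _ _)

lemma auxN_append (M : List Bool → ℝ) (σ : List Bool) (b : Bool) :
    auxN M (σ ++ [b]) = auxN M σ + bsgn b * auxw M σ := by
  unfold auxN
  rw [List.length_append, List.length_singleton, Finset.sum_range_succ]
  have h1 : ∀ i, i < σ.length → (σ ++ [b]).getD i false = σ.getD i false := by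
    intro i hi
    simp [List.getD_eq_getElem?_getD, List.getElem?_append_left hi]
  have h2 : ∀ i, i ≤ σ.length → (σ ++ [b]).take i = σ.take i := by
    intro i hi
    rw [List.take_append_of_le_length hi]
  have h3 : (σ ++ [b]).getD σ.length false = b := by
    simp [List.getD_eq_getElem?_getD]
  have h4 : (σ ++ [b]).take σ.length = σ := by
    simpa using h2 σ.length le_rfl
  rw [h3, h4]
  have : ∑ i ∈ Finset.range σ.length,
      bsgn ((σ ++ [b]).getD i false) * auxw M ((σ ++ [b]).take i)
      = ∑ i ∈ Finset.range σ.length, bsgn (σ.getD i false) * auxw M (σ.take i) := by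
    apply Finset.sum_congr rfl
    intro i hi
    rw [Finset.mem_range] at hi
    rw [h1 i hi, h2 i hi.le]
  rw [this]
  ring

lemma auxN_is_mart (M : List Bool → ℝ) : IsMartingale (auxN M) := by
  intro σ
  rw [auxN_append, auxN_append]
  simp [bsgn]
  ring

lemma inc_auxN (M : List Bool → ℝ) (σ : List Bool) : inc (auxN M) σ = auxw M σ := by
  unfold inc
  rw [auxN_append]
  simp [bsgn]

lemma M_append (M : List Bool → ℝ) (hM : IsMartingale M) (σ : List Bool) (b : Bool) :
    M (σ ++ [b]) = M σ + bsgn b * inc M σ := by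
  cases b
  · have := hM σ
    unfold inc
    simp only [bsgn, Bool.false_eq_true, if_false]
    linarith
  · unfold inc
    simp [bsgn]

lemma auxg_nonneg {x : ℝ} (hx : 0 ≤ x) : 0 ≤ auxg x := by
  unfold auxg
  split_ifs with h
  · exact hx
  · push_neg at h
    have : 0 < Real.log x := Real.log_pos h
    linarith

lemma auxg_le_abs (x : ℝ) : auxg x ≤ |auxg x| := le_abs_self _

/-- key inequality: g(a+e) ≤ g(a) + e·f(a) for 0 ≤ a, |e| ≤ a -/
lemma auxg_ineq {a e : ℝ} (ha : 0 ≤ a) (he : |e| ≤ a) :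
    auxg (a + e) ≤ auxg a + e * auxf a := by
  rcases eq_or_lt_of_le ha with h0 | hpos
  · have he0 : e = 0 := by
      have := abs_nonneg e
      have : |e| = 0 := le_antisymm (by rwa [← h0] at he) (abs_nonneg e)
      exact abs_eq_zero.mp this
    simp [he0]
  · have hea : -a ≤ e ∧ e ≤ a := abs_le.mp he
    have ha' : 0 ≤ a + e := by linarith [hea.1]
    by_cases ha1 : a ≤ 1
    · have hf : auxf a = 1 := by
        unfold auxf
        rw [min_eq_right]
        rw [le_div_iff₀ hpos]
        linarith
      rw [hf, mul_one]
      by_cases ha'1 : a + e ≤ 1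
      · unfold auxg
        rw [if_pos ha'1, if_pos ha1]
      · push_neg at ha'1
        unfold auxg
        rw [if_neg (not_le.mpr ha'1), if_pos ha1]
        have hlog : Real.log (a + e) ≤ (a + e) - 1 :=
          Real.log_le_sub_one_of_pos (by linarith)
        linarith
    · push_neg at ha1
      have hf : auxf a = 1/a := by
        unfold auxf
        rw [min_eq_left]
        rw [div_le_one hpos]
        linarith
      rw [hf]
      have hloga : 1 - 1/a ≤ Real.log a := by
        have h1 : Real.log (1/a) ≤ 1/a - 1 :=
          Real.log_le_sub_one_of_pos (by positivity)
        rw [one_div, Real.log_inv] at h1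
        rw [one_div]
        linarith
      by_cases ha'1 : a + e ≤ 1
      · unfold auxg
        rw [if_pos ha'1, if_neg (not_le.mpr ha1)]
        -- need: a+e ≤ 1 + log a + e/a, using (a+e)(1-1/a) ≤ 1-1/a ≤ log a
        have hfac : 0 ≤ 1 - 1/a := by
          have : 1/a < 1 := by rw [div_lt_one hpos]; linarith
          linarith
        have h1 : (a + e) * (1 - 1/a) ≤ 1 - 1/a :=
          mul_le_of_le_one_left hfac ha'1
        have h2 : (a + e) * (1 - 1/a) ≤ Real.log a := le_trans h1 hloga
        have hane : (a + e) * (1 - 1/a) = (a + e) - (a+e)/a := by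
          field_simp
        rw [hane] at h2
        have : (a+e)/a = 1 + e * (1/a) := by
          field_simp
        linarith [this ▸ h2]
      · push_neg at ha'1
        unfold auxg
        rw [if_neg (not_le.mpr ha'1), if_neg (not_le.mpr ha1)]
        have h1 : Real.log ((a+e)/a) ≤ (a+e)/a - 1 :=
          Real.log_le_sub_one_of_pos (by positivity)
        rw [Real.log_div (by linarith) (by linarith)] at h1
        have : (a+e)/a = 1 + e * (1/a) := by field_simp
        rw [this] at h1
        linarith

lemma auxw_eq_of_le (M : List Bool → ℝ) (σ : List Bool)
    (hpos : 0 ≤ M σ) (hle : |inc M σ| ≤ M σ) :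
    auxw M σ = inc M σ * auxf (M σ) := by
  have habs : |inc M σ * auxf (M σ)| ≤ 1 := by
    rcases eq_or_lt_of_le hpos with h0 | hp
    · have : inc M σ = 0 := by
        have h1 : |inc M σ| ≤ 0 := by rw [← h0] at hle; exact hle
        exact abs_eq_zero.mp (le_antisymm h1 (abs_nonneg _))
      simp [this]
    · rw [abs_mul]
      have hfpos : 0 ≤ auxf (M σ) := by
        unfold auxf
        rcases le_or_gt (1 / M σ) 1 with h | h
        · rw [min_eq_left h]; positivity
        · rw [min_eq_right h.le]; norm_num
      rw [abs_of_nonneg hfpos]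
      calc |inc M σ| * auxf (M σ) ≤ M σ * auxf (M σ) :=
            mul_le_mul_of_nonneg_right hle hfpos
        _ ≤ M σ * (1 / M σ) :=
            mul_le_mul_of_nonneg_left (min_le_left _ _) hp.le
        _ = 1 := by field_simp
  unfold auxw
  have h1 := abs_le.mp habs
  rw [min_eq_right h1.2, max_eq_right h1.1]

lemma pref_succ (X : ℕ → Bool) (n : ℕ) :
    pref X (n + 1) = pref X n ++ [X n] := by
  unfold pref
  rw [List.range_succ, List.map_append]
  rfl

lemma auxg_tendsto : Filter.Tendsto auxg Filter.atTop Filter.atTop := by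
  refine Filter.tendsto_atTop_mono' Filter.atTop ?_ Real.tendsto_log_atTop
  · filter_upwards [Filter.eventually_ge_atTop (1:ℝ)] with x hx
    unfold auxg
    split_ifs with h
    · have : x = 1 := le_antisymm h hx
      simp [this]
    · linarith [Real.log_nonneg hx]

/-- The interval `[0, 1]` singly anticipates `ℝ₊`: every martingale with nonnegative
real wagers is dominated by a martingale whose wagers lie in `[0, 1]`. -/
theorem Icc_singly_anticipates_nonneg :
    SinglyAnticipates (Set.Icc (0 : ℝ) 1) (Set.Ici (0 : ℝ)) := by
  intro M hMA
  obtain ⟨hM, _⟩ := hMA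
  refine ⟨auxN M, ⟨auxN_is_mart M, ?_⟩, ?_⟩
  · intro σ
    rw [inc_auxN]
    exact ⟨abs_nonneg _, abs_auxw_le_one M σ⟩
  · intro X ⟨htend, hbet⟩
    -- notation
    set m : ℕ → ℝ := fun n => M (pref X n) with hm
    have hstep : ∀ n, m (n+1) = m n + bsgn (X n) * inc M (pref X n) := by
      intro n
      simp only [hm]
      rw [pref_succ]
      exact M_append M hM _ _
    have hmpos : ∀ n, 0 ≤ m n := by
      intro n
      calc (0:ℝ) ≤ |inc M (pref X n)| := abs_nonneg _
        _ ≤ m n := hbet n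
    have hNstep : ∀ n, auxN M (pref X (n+1)) =
        auxN M (pref X n) + bsgn (X n) * auxw M (pref X n) := by
      intro n
      rw [pref_succ]
      exact auxN_append M _ _
    have hw : ∀ n, auxw M (pref X n) = inc M (pref X n) * auxf (m n) := by
      intro n
      exact auxw_eq_of_le M _ (hmpos n) (hbet n)
    -- key: N ≥ 1 + g(m n)
    have hkey : ∀ n, 1 + auxg (m n) ≤ auxN M (pref X n) := by
      intro n
      induction n with
      | zero =>
        have : pref X 0 = [] := rfl
        rw [this]
        unfold auxN
        simp only [List.length_nil, Finset.range_zero, Finset.sum_empty, add_zero]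
        have : m 0 = M [] := by simp [hm, pref]
        rw [this]
        linarith [auxg_le_abs (M [])]
      | succ n ih =>
        rw [hNstep n]
        have habs : |bsgn (X n) * inc M (pref X n)| ≤ m n := by
          rw [abs_mul]
          have : |bsgn (X n)| = 1 := by unfold bsgn; cases X n <;> simp
          rw [this, one_mul]
          exact hbet n
        have hineq := auxg_ineq (hmpos n) habs
        rw [← hstep n] at hineq
        have hsq : bsgn (X n) * inc M (pref X n) * auxf (m n)
            = bsgn (X n) * auxw M (pref X n) := by
          rw [hw n]; ring
        rw [hsq] at hineq
        linarith
    constructor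
    · -- tendsto
      have h1 : Filter.Tendsto (fun n => auxg (m n)) Filter.atTop Filter.atTop :=
        auxg_tendsto.comp htend
      apply Filter.tendsto_atTop_mono
        (f := fun n => 1 + auxg (m n)) hkey
      exact Filter.tendsto_atTop_add_const_left _ 1 h1
    · intro n
      rw [inc_auxN]
      calc |auxw M (pref X n)| ≤ 1 := abs_auxw_le_one M _
        _ ≤ 1 + auxg (m n) := by linarith [auxg_nonneg (hmpos n)]
        _ ≤ auxN M (pref X n) := hkey n

end AuxProof
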